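/- arXiv:2208.07808 — 2 statements merged into one kernel-verified Lean document; each statement's English description precedes it below -/
import Mathlib

section
/- Let (A, E, s) be a weakly idempotent complete extriangulated category. Then the following are equivalent for a non-zero object S of A: (i) S is (E, s)-simple; (ii) for each extriangle A →a S → C ⇢, either A is a zero object or a is an isomorphism. -/
/-!
Common axiomatic framework: extriangulated categories in the sense of Nakaoka–Palu,
formalised as a biadditive functor `E` together with a realisation predicate
`IsExtriangle` subject to the axioms (ET1)–(ET4), (ET3)ᵒᵖ, (ET4)ᵒᵖ.
-/

open CategoryTheory CategoryTheory.Limits ZeroObject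

attribute [local instance] CategoryTheory.Limits.hasBinaryBiproducts_of_finite_biproducts

universe v u

namespace ExtriPaper

/-- The data underlying an extriangulated category: a biadditive functor `E` and,
for each extension `δ ∈ E(X, A)`, the predicate picking out the pairs of composable
morphisms `A ⟶ B ⟶ X` belonging to the equivalence class `s(δ)`. -/
structure PreExt (C : Type u) [Category.{v} C] [Preadditive C] where
  E : Cᵒᵖ ⥤ C ⥤ AddCommGrpCat.{v}
  IsExtriangle : ∀ {A B X : C}, (A ⟶ B) → (B ⟶ X) → ↥((E.obj (Opposite.op X)).obj A) → Prop

namespace PreExt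

variable {C : Type u} [Category.{v} C] [Preadditive C]
variable (S : PreExt C)

/-- The group `E(X, A)` of extensions of `X` by `A`. -/
abbrev Ext (X A : C) : Type v := ↥((S.E.obj (Opposite.op X)).obj A)

/-- Pushforward `a_* δ` of an extension along `a : A ⟶ A'`. -/
def push {X A A' : C} (a : A ⟶ A') (δ : S.Ext X A) : S.Ext X A' :=
  (S.E.obj (Opposite.op X)).map a δ

/-- Pullback `c^* δ` of an extension along `c : X' ⟶ X`. -/
def pull {X' X A : C} (c : X' ⟶ X) (δ : S.Ext X A) : S.Ext X' A :=
  (S.E.map c.op).app A δ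

section Axioms

variable [HasZeroObject C] [HasFiniteBiproducts C]

/-- The direct sum `δ ⊕ δ'` of two extensions. -/
noncomputable def sumExt {X X' A A' : C} (δ : S.Ext X A) (δ' : S.Ext X' A') :
    S.Ext (X ⊞ X') (A ⊞ A') :=
  S.push biprod.inl (S.pull biprod.fst δ) + S.push biprod.inr (S.pull biprod.snd δ')

/-- The axioms of an extriangulated category (Nakaoka–Palu): `E` is biadditive,
`s` (encoded by `IsExtriangle`) is an additive realisation defined on equivalence
classes, and the axioms (ET3), (ET3)ᵒᵖ, (ET4), (ET4)ᵒᵖ hold. -/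
structure IsET : Prop where
  /-- Biadditivity of `E` in the covariant variable. -/
  push_add : ∀ {X A A' : C} (a b : A ⟶ A') (δ : S.Ext X A),
      S.push (a + b) δ = S.push a δ + S.push b δ
  /-- Biadditivity of `E` in the contravariant variable. -/
  pull_add : ∀ {X X' A : C} (c d : X' ⟶ X) (δ : S.Ext X A),
      S.pull (c + d) δ = S.pull c δ + S.pull d δ
  /-- Every extension is realised by a pair of composable morphisms. -/
  realize_exists : ∀ {A X : C} (δ : S.Ext X A),
      ∃ (B : C) (f : A ⟶ B) (g : B ⟶ X), S.IsExtriangle f g δ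
  /-- The realisation is closed under equivalence of pairs of composable morphisms. -/
  realize_iso : ∀ {A B B' X : C} {f : A ⟶ B} {g : B ⟶ X} {δ : S.Ext X A} (e : B ≅ B'),
      S.IsExtriangle f g δ → S.IsExtriangle (f ≫ e.hom) (e.inv ≫ g) δ
  /-- Any two realisations of the same extension are equivalent. -/
  realize_unique : ∀ {A B B' X : C} {f : A ⟶ B} {g : B ⟶ X} {f' : A ⟶ B'} {g' : B' ⟶ X}
      {δ : S.Ext X A}, S.IsExtriangle f g δ → S.IsExtriangle f' g' δ →
      ∃ e : B ≅ B', f ≫ e.hom = f' ∧ e.hom ≫ g' = g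
  /-- Morphisms of extensions lift to morphisms of extriangles. -/
  realize_map : ∀ {A B X A' B' X' : C} {f : A ⟶ B} {g : B ⟶ X} {δ : S.Ext X A}
      {f' : A' ⟶ B'} {g' : B' ⟶ X'} {δ' : S.Ext X' A'},
      S.IsExtriangle f g δ → S.IsExtriangle f' g' δ' →
      ∀ (a : A ⟶ A') (c : X ⟶ X'), S.push a δ = S.pull c δ' →
      ∃ b : B ⟶ B', f ≫ b = a ≫ f' ∧ b ≫ g' = g ≫ c
  /-- The zero extension is realised by the split pair. -/
  realize_zero : ∀ (A X : C),
      S.IsExtriangle (biprod.inl : A ⟶ A ⊞ X) (biprod.snd : A ⊞ X ⟶ X) (0 : S.Ext X A)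
  /-- The realisation is additive. -/
  realize_sum : ∀ {A B X A' B' X' : C} {f : A ⟶ B} {g : B ⟶ X} {δ : S.Ext X A}
      {f' : A' ⟶ B'} {g' : B' ⟶ X'} {δ' : S.Ext X' A'},
      S.IsExtriangle f g δ → S.IsExtriangle f' g' δ' →
      S.IsExtriangle (biprod.map f f') (biprod.map g g') (S.sumExt δ δ')
  /-- Axiom (ET3). -/
  et3 : ∀ {A B X A' B' X' : C} {f : A ⟶ B} {g : B ⟶ X} {δ : S.Ext X A}
      {f' : A' ⟶ B'} {g' : B' ⟶ X'} {δ' : S.Ext X' A'},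
      S.IsExtriangle f g δ → S.IsExtriangle f' g' δ' →
      ∀ (a : A ⟶ A') (b : B ⟶ B'), f ≫ b = a ≫ f' →
      ∃ c : X ⟶ X', g ≫ c = b ≫ g' ∧ S.push a δ = S.pull c δ'
  /-- Axiom (ET3)ᵒᵖ. -/
  et3op : ∀ {A B X A' B' X' : C} {f : A ⟶ B} {g : B ⟶ X} {δ : S.Ext X A}
      {f' : A' ⟶ B'} {g' : B' ⟶ X'} {δ' : S.Ext X' A'},
      S.IsExtriangle f g δ → S.IsExtriangle f' g' δ' →
      ∀ (b : B ⟶ B') (c : X ⟶ X'), g ≫ c = b ≫ g' →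
      ∃ a : A ⟶ A', f ≫ b = a ≫ f' ∧ S.push a δ = S.pull c δ'
  /-- Axiom (ET4). -/
  et4 : ∀ {A B D F G : C} {f : A ⟶ B} {f' : B ⟶ D} {δ : S.Ext D A}
      {g : B ⟶ G} {g' : G ⟶ F} {δ' : S.Ext F B},
      S.IsExtriangle f f' δ → S.IsExtriangle g g' δ' →
      ∃ (E₀ : C) (h : G ⟶ E₀) (d : D ⟶ E₀) (e : E₀ ⟶ F) (δ'' : S.Ext E₀ A),
        S.IsExtriangle (f ≫ g) h δ'' ∧
        S.IsExtriangle d e (S.push f' δ') ∧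
        S.pull d δ'' = δ ∧
        S.push f δ'' = S.pull e δ' ∧
        f' ≫ d = g ≫ h ∧ h ≫ e = g'
  /-- Axiom (ET4)ᵒᵖ. -/
  et4op : ∀ {D B A F G : C} {p : D ⟶ B} {f₁ : B ⟶ A} {δ₁ : S.Ext A D}
      {q : F ⟶ G} {g₁ : G ⟶ B} {δ₁' : S.Ext B F},
      S.IsExtriangle p f₁ δ₁ → S.IsExtriangle q g₁ δ₁' →
      ∃ (E₀ : C) (h : E₀ ⟶ G) (d : E₀ ⟶ D) (e : F ⟶ E₀) (δ'' : S.Ext A E₀),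
        S.IsExtriangle h (g₁ ≫ f₁) δ'' ∧
        S.IsExtriangle e d (S.pull p δ₁') ∧
        S.push d δ'' = δ₁ ∧
        S.pull f₁ δ'' = S.push e δ₁' ∧
        d ≫ p = h ≫ g₁ ∧ e ≫ h = q

end Axioms

/-- A morphism is an inflation if it occurs as the first morphism of an extriangle. -/
def IsInflation {A B : C} (f : A ⟶ B) : Prop :=
  ∃ (X : C) (g : B ⟶ X) (δ : S.Ext X A), S.IsExtriangle f g δ

/-- A morphism is a deflation if it occurs as the second morphism of an extriangle. -/
def IsDeflation {B X : C} (g : B ⟶ X) : Prop :=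
  ∃ (A : C) (f : A ⟶ B) (δ : S.Ext X A), S.IsExtriangle f g δ

/-- An isomorphism of extriangles: a triple of isomorphisms compatible with the
structure morphisms and identifying the two extensions. -/
def TriIso {A B X A' B' X' : C} (f : A ⟶ B) (g : B ⟶ X) (δ : S.Ext X A)
    (f' : A' ⟶ B') (g' : B' ⟶ X') (δ' : S.Ext X' A') : Prop :=
  ∃ (iA : A ≅ A') (iB : B ≅ B') (iX : X ≅ X'),
    f ≫ iB.hom = iA.hom ≫ f' ∧ g ≫ iX.hom = iB.hom ≫ g' ∧
    S.push iA.hom δ = S.pull iX.hom δ'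

/-- A chain of `t` composable extriangles: inflations `obj i ⟶ obj (i+1)` each fitting
in an extriangle with cone `factor i`.  This underlies filtrations, inflation series
and composition series alike. -/
structure FChain (t : ℕ) where
  obj : Fin (t + 1) → C
  factor : Fin t → C
  f : ∀ i : Fin t, obj i.castSucc ⟶ obj i.succ
  g : ∀ i : Fin t, obj i.succ ⟶ factor i
  δ : ∀ i : Fin t, S.Ext (factor i) (obj i.castSucc)
  ext : ∀ i : Fin t, S.IsExtriangle (f i) (g i) (δ i)

/-- The composite `obj 0 ⟶ obj i` of the morphisms of a chain. -/
def FChain.comp {t : ℕ} (c : S.FChain t) : ∀ i : Fin (t + 1), c.obj 0 ⟶ c.obj i :=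
  Fin.induction (𝟙 _) (fun i ih => ih ≫ c.f i)

/-- The subcategory `F(P)` of objects admitting a filtration with factors in `P`. -/
def Filt (P : Set C) : Set C :=
  {M | ∃ (t : ℕ) (c : S.FChain t), IsZero (c.obj 0) ∧ c.obj (Fin.last t) = M ∧
      ∀ i, c.factor i ∈ P}

/-- An `(E, s)`-simple object: a non-zero object `M` such that in every extriangle
`A →a M → X ⇢` the inflation `a` is zero or an isomorphism. -/
def SSimple (M : C) : Prop :=
  ¬ IsZero M ∧ ∀ (A X : C) (a : A ⟶ M) (g : M ⟶ X) (δ : S.Ext X A),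
    S.IsExtriangle a g δ → a = 0 ∨ IsIso a

/-- The zero objects of `C` are `(E, s)`-simple-like. -/
def ZeroSimpleLike : Prop :=
  ∀ (A Z X : C) (f : A ⟶ Z) (g : Z ⟶ X) (δ : S.Ext X A),
    IsZero Z → S.IsExtriangle f g δ → IsZero A

/-- `c` is an `(E, s)`-composition series of `M`. -/
def IsCompSeries {t : ℕ} (c : S.FChain t) (M : C) : Prop :=
  IsZero (c.obj 0) ∧ c.obj (Fin.last t) = M ∧ ∀ i, S.SSimple (c.factor i)

/-- `(A, E, s)` is a length extriangulated category. -/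
def LengthCat : Prop :=
  ∀ M : C, (∃ (t : ℕ) (c : S.FChain t), S.IsCompSeries c M) ∧
    ∃ N : ℕ, ∀ (t : ℕ) (c : S.FChain t), S.IsCompSeries c M → t ≤ N

/-- `(A, E, s)` is a Jordan–Hölder extriangulated category: any two composition series
of an object have the same length and, up to a permutation, isomorphic simple factors. -/
def JordanHolder : Prop :=
  ∀ (M : C) (t t' : ℕ) (c : S.FChain t) (c' : S.FChain t'),
    S.IsCompSeries c M → S.IsCompSeries c' M →
    ∃ e : Fin t ≃ Fin t', ∀ i, Nonempty (c.factor i ≅ c'.factor (e i))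

/-- `c` is an `(E, s)`-inflation series of `B`: a filtration of `B` with non-zero factors. -/
def IsInflSeries {t : ℕ} (c : S.FChain t) (B : C) : Prop :=
  IsZero (c.obj 0) ∧ c.obj (Fin.last t) = B ∧ ∀ i, ¬ IsZero (c.factor i)

/-- `X` and `Y` admit isomorphic `(E, s)`-inflation series. -/
def HaveIsoInflSeries (X Y : C) : Prop :=
  ∃ (t : ℕ) (c d : S.FChain t), S.IsInflSeries c X ∧ S.IsInflSeries d Y ∧
    ∃ e : Equiv.Perm (Fin t), ∀ i, Nonempty (c.factor i ≅ d.factor (e i))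

/-- Simplicity of `M` with respect to the extriangulated structure restricted to the
extension-closed subcategory `𝒮`: extriangles of the restricted structure are exactly
the ambient extriangles all of whose terms lie in `𝒮`. -/
def SimpleIn (𝒮 : Set C) (M : C) : Prop :=
  M ∈ 𝒮 ∧ ¬ IsZero M ∧ ∀ (A X : C) (a : A ⟶ M) (g : M ⟶ X) (δ : S.Ext X A),
    A ∈ 𝒮 → X ∈ 𝒮 → S.IsExtriangle a g δ → a = 0 ∨ IsIso a

/-- `c` is a composition series of `M` in the extriangulated structure restricted to `𝒮`. -/
def IsCompSeriesIn (𝒮 : Set C) {t : ℕ} (c : S.FChain t) (M : C) : Prop :=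
  IsZero (c.obj 0) ∧ c.obj (Fin.last t) = M ∧ (∀ i, c.obj i ∈ 𝒮) ∧
    ∀ i, S.SimpleIn 𝒮 (c.factor i)

section Star

variable [HasZeroObject C] [HasFiniteBiproducts C]

/-- The subcategory `P ∗ Q` of objects `Z` admitting an extriangle `X → Z → Y ⇢`
with `X ∈ P` and `Y ∈ Q`. -/
def star (P Q : Set C) : Set C :=
  {Z | ∃ (X Y : C) (f : X ⟶ Z) (g : Z ⟶ Y) (δ : S.Ext Y X),
      X ∈ P ∧ Y ∈ Q ∧ S.IsExtriangle f g δ}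

/-- Iterated `∗` of a list of subcategories (the empty `∗` being the zero objects). -/
def starMany : List (Set C) → Set C
  | [] => {Z | IsZero Z}
  | P :: l => S.star P (starMany l)

end Star

/-- The relative projectives `P(P) = {Z : E(Z, Y) = 0 for all Y ∈ F(P)}`. -/
def projSet (P : Set C) : Set C :=
  {Z | ∀ Y ∈ S.Filt P, ∀ δ : S.Ext Z Y, δ = 0}

/-- `Hom(W, −)` is left exact on the extriangulated structure restricted to `𝒮`:
for every extriangle `A →a B → X ⇢` with all terms in `𝒮`, composition with `a`
is injective on morphisms from `W`. -/
def HomLeftExactOn (W : C) (𝒮 : Set C) : Prop :=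
  ∀ (A B X : C) (a : A ⟶ B) (g : B ⟶ X) (δ : S.Ext X A),
    A ∈ 𝒮 → B ∈ 𝒮 → X ∈ 𝒮 → S.IsExtriangle a g δ →
    ∀ φ ψ : W ⟶ A, φ ≫ a = ψ ≫ a → φ = ψ

/-- The subset of the free abelian group on objects consisting of the defining
relations of the Grothendieck group `K₀(A, E, s)`. -/
def K0Rels : Set (FreeAbelianGroup C) :=
  {x | ∃ (A B X : C) (f : A ⟶ B) (g : B ⟶ X) (δ : S.Ext X A), S.IsExtriangle f g δ ∧
      x = FreeAbelianGroup.of A + FreeAbelianGroup.of X - FreeAbelianGroup.of B} ∪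
  {x | ∃ (X Y : C) (_ : X ≅ Y), x = FreeAbelianGroup.of X - FreeAbelianGroup.of Y}

/-- `[M] = [M']` in the Grothendieck group `K₀(A, E, s)`, the quotient of the free
abelian group on (isomorphism classes of) objects by the extriangle relations. -/
def GrpRel (M M' : C) : Prop :=
  FreeAbelianGroup.of M - FreeAbelianGroup.of M' ∈ AddSubgroup.closure S.K0Rels

end PreExt

/-- The congruence defining the Grothendieck monoid: `MonRel S M M'` holds if and only
if `[M] = [M']` in the Grothendieck monoid `M(A, E, s)`, the quotient of the monoid of
isomorphism classes of objects (under `⊞`) by the congruence generated by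
`[B] ∼ [A] + [X]` for each extriangle `A → B → X ⇢`. -/
inductive MonRel {C : Type u} [Category.{v} C] [Preadditive C] [HasZeroObject C]
    [HasFiniteBiproducts C] (S : PreExt C) : C → C → Prop
  | of {A B X : C} {f : A ⟶ B} {g : B ⟶ X} {δ : S.Ext X A}
      (h : S.IsExtriangle f g δ) : MonRel S B (A ⊞ X)
  | iso {X Y : C} (e : X ≅ Y) : MonRel S X Y
  | symm {X Y : C} : MonRel S X Y → MonRel S Y X
  | trans {X Y Z : C} : MonRel S X Y → MonRel S Y Z → MonRel S X Z
  | add {X Y : C} (Z : C) : MonRel S X Y → MonRel S (X ⊞ Z) (Y ⊞ Z)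

/-- `[M]` is an atom of the Grothendieck monoid `M(A, E, s)`. -/
def IsAtomClass {C : Type u} [Category.{v} C] [Preadditive C] [HasZeroObject C]
    [HasFiniteBiproducts C] (S : PreExt C) (M : C) : Prop :=
  ¬ MonRel S M 0 ∧ ∀ X Y : C, MonRel S M (X ⊞ Y) → MonRel S X 0 ∨ MonRel S Y 0

/-- An additive category is weakly idempotent complete if every retraction admits a kernel. -/
def WeaklyIdemComplete (C : Type u) [Category.{v} C] [Preadditive C] : Prop :=
  ∀ (X Y : C) (r : X ⟶ Y), IsSplitEpi r → HasKernel r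

/-- A set of objects is closed under direct summands. -/
def ClosedSummands {C : Type u} [Category.{v} C] [Preadditive C] [HasZeroObject C]
    [HasFiniteBiproducts C] (P : Set C) : Prop :=
  ∀ (X Y Z : C), Z ∈ P → Nonempty (Z ≅ X ⊞ Y) → X ∈ P

/-- A Krull–Schmidt category: every object is a finite biproduct of objects having
local endomorphism rings. -/
def KrullSchmidtCat (C : Type u) [Category.{v} C] [Preadditive C] [HasZeroObject C]
    [HasFiniteBiproducts C] : Prop :=
  ∀ X : C, ∃ (n : ℕ) (Y : Fin n → C),
    (∀ i, IsLocalRing (End (Y i))) ∧ Nonempty (X ≅ ⨁ Y)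

/-- The closure `add Ψ` of a set of objects under finite direct sums and isomorphisms. -/
def addSet {C : Type u} [Category.{v} C] [Preadditive C] [HasZeroObject C]
    [HasFiniteBiproducts C] (P : Set C) : Set C :=
  {X | ∃ (m : ℕ) (f : Fin m → C), (∀ k, f k ∈ P) ∧ Nonempty (X ≅ ⨁ f)}

/-- An indecomposable object. -/
def Indec {C : Type u} [Category.{v} C] [Preadditive C] [HasZeroObject C]
    [HasFiniteBiproducts C] (X : C) : Prop :=
  ¬ IsZero X ∧ ∀ (Y Z : C), Nonempty (X ≅ Y ⊞ Z) → IsZero Y ∨ IsZero Z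

/-- A morphism `q` is right minimal. -/
def RightMinimal {C : Type u} [Category.{v} C] {X Y : C} (q : X ⟶ Y) : Prop :=
  ∀ g : X ⟶ X, g ≫ q = q → IsIso g

/-- The extra structure making an extriangulated category into an artin `R`-linear
extriangulated category: an `R`-module structure on each `E(X, A)` for which `E` is
`R`-bilinear, with all Hom-sets and all `E(X, A)` of finite length over `R`. -/
structure ArtinLinear {C : Type u} [Category.{v} C] [Preadditive C]
    (R : Type*) [CommRing R] [CategoryTheory.Linear R C] (S : PreExt C) where
  module : ∀ X A : C, Module R (S.Ext X A)
  push_smul : ∀ {X A A' : C} (r : R) (a : A ⟶ A') (δ : S.Ext X A),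
      S.push (r • a) δ = letI := module X A'; r • S.push a δ
  pull_smul : ∀ {X' X A : C} (r : R) (c : X' ⟶ X) (δ : S.Ext X A),
      S.pull (r • c) δ = letI := module X' A; r • S.pull c δ
  homFinite : ∀ X Y : C, IsFiniteLength R (X ⟶ Y)
  extFinite : ∀ X A : C, letI := module X A; IsFiniteLength R (S.Ext X A)

/-- An `E`-stratifying system: a finite family of indecomposable objects subject to
the orthogonality axioms (S1) and (S2). -/
structure IsStratSys {C : Type u} [Category.{v} C] [Preadditive C] [HasZeroObject C]
    [HasFiniteBiproducts C] (S : PreExt C) {n : ℕ} (Φ : Fin n → C) : Prop where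
  indec : ∀ i, Indec (Φ i)
  s1 : ∀ i j : Fin n, i < j → ∀ φ : Φ j ⟶ Φ i, φ = 0
  s2 : ∀ i j : Fin n, i ≤ j → ∀ δ : S.Ext (Φ j) (Φ i), δ = 0

/-- The data of extriangles `K i → Q i → Φ i ⇢η i` with `K i ∈ F(Φ_{j>i})`, as in
axiom (PS2) of a projective `E`-stratifying system. -/
structure ProjData {C : Type u} [Category.{v} C] [Preadditive C]
    (S : PreExt C) {n : ℕ} (Φ Q : Fin n → C) where
  K : Fin n → C
  k : ∀ i, K i ⟶ Q i
  q : ∀ i, Q i ⟶ Φ i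
  η : ∀ i, S.Ext (Φ i) (K i)
  ext : ∀ i, S.IsExtriangle (k i) (q i) (η i)
  kmem : ∀ i, K i ∈ S.Filt (Φ '' {j | i < j})

/-- `(Φ, Q)` is a projective `E`-stratifying system. -/
def IsProjSS {C : Type u} [Category.{v} C] [Preadditive C] [HasZeroObject C]
    [HasFiniteBiproducts C] (S : PreExt C) {n : ℕ} (Φ Q : Fin n → C) : Prop :=
  IsStratSys S Φ ∧ (∀ i j : Fin n, ∀ δ : S.Ext (Q i) (Φ j), δ = 0) ∧
    Nonempty (ProjData S Φ Q)

/-- `(Φ, Q)` is a minimal projective `E`-stratifying system: the morphisms `q i` of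
the extriangles witnessing (PS2) may be chosen right minimal. -/
def IsMinProjSS {C : Type u} [Category.{v} C] [Preadditive C] [HasZeroObject C]
    [HasFiniteBiproducts C] (S : PreExt C) {n : ℕ} (Φ Q : Fin n → C) : Prop :=
  IsStratSys S Φ ∧ (∀ i j : Fin n, ∀ δ : S.Ext (Q i) (Φ j), δ = 0) ∧
    ∃ d : ProjData S Φ Q, ∀ i, RightMinimal (d.q i)

/-!
If `a = 0`, the deflation `g : M ⟶ X` is a split mono; by weak idempotent completeness its
retraction `r` has a kernel `K`, so `K → X → M` is a split extriangle. (ET4)ᵒᵖ applied to it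
and to `A → M → X` produces an extriangle `E → M → M` with deflation `g ≫ r = 𝟙`, forcing
`E = 0`, together with an inflation `A → E`. Adding the split extriangle `M → M → 0` shows that
the projection `A ⊞ M ⟶ M` is an inflation; simplicity of the non-zero `M` makes it an
isomorphism, hence `A = 0`.
-/

theorem isZero_of_isIso_biprod_snd {C : Type u} [Category.{v} C] [Preadditive C] {X Y : C}
    [HasBinaryBiproduct X Y] [IsIso (biprod.snd : X ⊞ Y ⟶ Y)] : IsZero X :=
  IsZero.of_mono_eq_zero biprod.inl <| by
    rw [← cancel_mono (biprod.snd : X ⊞ Y ⟶ Y), biprod.inl_snd, zero_comp]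

namespace PreExt

variable {C : Type u} [Category.{v} C] [Preadditive C]

@[simp]
theorem pull_id (S : PreExt C) {X A : C} (δ : S.Ext X A) : S.pull (𝟙 X) δ = δ := by
  simp [pull]

theorem pull_pull (S : PreExt C) {X'' X' X A : C} (c : X'' ⟶ X') (c' : X' ⟶ X)
    (δ : S.Ext X A) : S.pull c (S.pull c' δ) = S.pull (c ≫ c') δ := by
  simp [pull]

theorem SSimple.isZero_of_isInflation_biprod_snd {S : PreExt C} {A M : C}
    [HasBinaryBiproduct A M] (hM : S.SSimple M) (h : S.IsInflation (biprod.snd : A ⊞ M ⟶ M)) :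
    IsZero A := by
  obtain ⟨X, g, δ, hext⟩ := h
  obtain h0 | hiso := hM.2 _ _ _ _ _ hext
  · exact absurd (IsZero.of_epi_eq_zero _ h0) hM.1
  · exact isZero_of_isIso_biprod_snd (Y := M)

namespace IsET

variable [HasFiniteBiproducts C] {S : PreExt C}

theorem exists_comp_eq_of_comp_eq_zero [HasZeroObject C] (hS : S.IsET) {A B X T : C}
    {f : A ⟶ B} {g : B ⟶ X} {δ : S.Ext X A} (hext : S.IsExtriangle f g δ) (t : B ⟶ T)
    (ht : f ≫ t = 0) : ∃ c : X ⟶ T, g ≫ c = t := by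
  obtain ⟨c, hc, -⟩ := hS.et3 hext (hS.realize_zero (0 : C) T) 0 (t ≫ biprod.inr)
    (by rw [reassoc_of% ht, zero_comp, zero_comp])
  exact ⟨c, by simpa using hc⟩

theorem pull_deflation_eq_zero (hS : S.IsET) {A B X : C} {f : A ⟶ B} {g : B ⟶ X}
    {δ : S.Ext X A} (hext : S.IsExtriangle f g δ) : S.pull g δ = 0 := by
  obtain ⟨a, -, ha⟩ := hS.et3op (hS.realize_zero A B) hext biprod.snd g rfl
  rw [← ha]
  exact map_zero _

theorem isExtriangle_of_isBilimit (hS : S.IsET) {A X : C} {b : BinaryBicone A X}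
    (hb : b.IsBilimit) : S.IsExtriangle b.inl b.snd (0 : S.Ext X A) := by
  simpa using hS.realize_iso (biprod.uniqueUpToIso A X hb).symm (hS.realize_zero A X)

theorem isExtriangle_kernel_ι (hS : S.IsET) {X M : C} (r : X ⟶ M) [IsSplitEpi r]
    [HasKernel r] : S.IsExtriangle (kernel.ι r) r (0 : S.Ext M (kernel r)) :=
  hS.isExtriangle_of_isBilimit (isBilimitBinaryBiconeOfIsSplitEpiOfKernel (kernelIsKernel r))

theorem isZero_of_isIso_deflation (hS : S.IsET) {A B X : C} {f : A ⟶ B} {g : B ⟶ X}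
    [IsIso g] {δ : S.Ext X A} (hext : S.IsExtriangle f g δ) : IsZero A := by
  have hδ : δ = 0 := by
    rw [← S.pull_id δ, ← IsIso.inv_hom_id g, ← S.pull_pull, hS.pull_deflation_eq_zero hext]
    exact map_zero _
  subst hδ
  obtain ⟨e, -, he⟩ := hS.realize_unique (hS.realize_zero A X) hext
  have : IsIso (biprod.snd : A ⊞ X ⟶ X) := by
    rw [← he]
    infer_instance
  exact isZero_of_isIso_biprod_snd (Y := X)

theorem isInflation_biprod_snd [HasZeroObject C] (hS : S.IsET) {A Z : C} {f : A ⟶ Z}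
    (hf : S.IsInflation f) (hZ : IsZero Z) (M : C) : S.IsInflation (biprod.snd : A ⊞ M ⟶ M) := by
  obtain ⟨X, g, δ, hext⟩ := hf
  let e : Z ⊞ (M ⊞ (0 : C)) ≅ M :=
    (isoZeroBiprod hZ).symm ≪≫ (isoBiprodZero (isZero_zero C)).symm
  have he : biprod.map f biprod.inl ≫ e.hom = (biprod.snd : A ⊞ M ⟶ M) := by
    simp [e]
  exact ⟨_, _, _, he ▸ hS.realize_iso e (hS.realize_sum hext (hS.realize_zero M 0))⟩

theorem isZero_of_isExtriangle_zero [HasZeroObject C] (hS : S.IsET)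
    (hwic : WeaklyIdemComplete C) {A M X : C} (hM : S.SSimple M) {g : M ⟶ X} {δ : S.Ext X A}
    (hext : S.IsExtriangle (0 : A ⟶ M) g δ) : IsZero A := by
  obtain ⟨r, hgr⟩ := hS.exists_comp_eq_of_comp_eq_zero hext (𝟙 M) zero_comp
  have : IsSplitEpi r := IsSplitEpi.mk' ⟨g, hgr⟩
  have : HasKernel r := hwic X M r inferInstance
  obtain ⟨E, _, _, _, _, hEM, hAE, -⟩ := hS.et4op (hS.isExtriangle_kernel_ι r) hext
  rw [hgr] at hEM
  exact hM.isZero_of_isInflation_biprod_snd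
    (hS.isInflation_biprod_snd ⟨_, _, _, hAE⟩ (hS.isZero_of_isIso_deflation hEM) M)

end IsET

end PreExt

section Statements

variable {C : Type u} [Category.{v} C] [Preadditive C] [HasZeroObject C] [HasFiniteBiproducts C]

theorem stmt5 (S : PreExt C) (hS : S.IsET) (hwic : WeaklyIdemComplete C)
    (M : C) (hM : ¬ IsZero M) :
    S.SSimple M ↔
      ∀ (A X : C) (a : A ⟶ M) (g : M ⟶ X) (δ : S.Ext X A),
        S.IsExtriangle a g δ → IsZero A ∨ IsIso a := by
  refine ⟨fun hsimple A X a g δ hext => ?_, fun h => ⟨hM, fun A X a g δ hext => ?_⟩⟩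
  · obtain rfl | ha := hsimple.2 A X a g δ hext
    · exact .inl (hS.isZero_of_isExtriangle_zero hwic hsimple hext)
    · exact .inr ha
  · exact (h A X a g δ hext).imp (fun hA => hA.eq_of_src _ _) id

end Statements

end ExtriPaper
end

section
/- Let (A, E, s) be a skeletally small extriangulated category. For objects M, M' of A, one has [M] = [M'] in the Grothendieck monoid M(A, E, s) if and only if there exists a finite sequence of objects M = A_0, A_1, …, A_n = M' of A such that for each 1 ≤ i ≤ n, the objects A_{i-1} and A_i admit isomorphic (E, s)-inflation series. -/
/-!
Common axiomatic framework: extriangulated categories in the sense of Nakaoka–Palu,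
formalised as a biadditive functor `E` together with a realisation predicate
`IsExtriangle` subject to the axioms (ET1)–(ET4), (ET3)ᵒᵖ, (ET4)ᵒᵖ.
-/

open CategoryTheory CategoryTheory.Limits ZeroObject

attribute [local instance] CategoryTheory.Limits.hasBinaryBiproducts_of_finite_biproducts

universe v u

namespace ExtriPaper

/-!
An extriangle `A ↣ B ↠ X` with `A, X ≠ 0` yields the inflation series `0 ↣ A ↣ B` and
`0 ↣ A ↣ A ⊞ X`, which have the same factors `A, X` (if `A` or `X` is zero the extriangle
splits), and adding a summand `Z` to every term of two such series keeps their factors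
matched. Hence each generator of the congruence defining the Grothendieck monoid is a chain of
steps between objects with isomorphic inflation series. Conversely, an inflation series of `M`
gives `[M] = [⨁ᵢ Mᵢ / Mᵢ₋₁]`, which only depends on the factors up to permutation and
isomorphism.
-/

theorem _root_.Relation.reflTransGen_iff_exists_fin {α : Type*} {r : α → α → Prop} {a b : α} :
    Relation.ReflTransGen r a b ↔ ∃ (n : ℕ) (A : Fin (n + 1) → α), A 0 = a ∧
      A (Fin.last n) = b ∧ ∀ i : Fin n, r (A i.castSucc) (A i.succ) := by
  constructor
  · intro h
    induction h using Relation.ReflTransGen.head_induction_on with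
    | refl => exact ⟨0, fun _ => b, rfl, rfl, Fin.elim0⟩
    | @head a c hac _ ih =>
      obtain ⟨n, A, h0, hlast, hstep⟩ := ih
      refine ⟨n + 1, Fin.cons a A, rfl, hlast, Fin.cases ?_ hstep⟩
      simpa [← h0] using hac
  · rintro ⟨n, A, rfl, rfl, hstep⟩
    induction n with
    | zero => rfl
    | succ n ih =>
      refine Relation.ReflTransGen.head (hstep 0) ?_
      simpa [Fin.succ_last] using ih (fun i => A i.succ) fun i => hstep i.succ

theorem _root_.Equiv.Perm.exists_forall_rel_of_fin_cases {α : Type*} (r : α → α → Prop) {t : ℕ}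
    {F G : Fin (t + 1) → α} (h0 : r (F 0) (G 0)) (e : Equiv.Perm (Fin t))
    (hsucc : ∀ i, r (F i.succ) (G (e i).succ)) :
    ∃ e' : Equiv.Perm (Fin (t + 1)), ∀ i, r (F i) (G (e' i)) :=
  ⟨Equiv.Perm.decomposeFin.symm (0, e), Fin.cases (by simpa using h0) (by simpa using hsucc)⟩

namespace PreExt

variable {C : Type u} [Category.{v} C] [Preadditive C] {S : PreExt C}

theorem HaveIsoInflSeries.symm {X Y : C} (h : S.HaveIsoInflSeries X Y) :
    S.HaveIsoInflSeries Y X := by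
  obtain ⟨t, c, d, hc, hd, e, he⟩ := h
  exact ⟨t, d, c, hd, hc, e.symm, fun i => by simpa using (he (e.symm i)).map Iso.symm⟩

namespace FChain

variable (S) in
def nil (Z : C) : S.FChain 0 where
  obj _ := Z
  factor := finZeroElim
  f := finZeroElim
  g := finZeroElim
  δ := finZeroElim
  ext := finZeroElim

def cons {t : ℕ} (c : S.FChain t) {N F : C} {f₀ : N ⟶ c.obj 0} {g₀ : c.obj 0 ⟶ F}
    {δ₀ : S.Ext F N} (h₀ : S.IsExtriangle f₀ g₀ δ₀) : S.FChain (t + 1) where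
  obj := Fin.cons N c.obj
  factor := Fin.cons F c.factor
  f := Fin.cases f₀ c.f
  g := Fin.cases g₀ c.g
  δ := Fin.cases δ₀ c.δ
  ext := Fin.cases h₀ c.ext

def init {t : ℕ} (c : S.FChain (t + 1)) : S.FChain t where
  obj := c.obj ∘ Fin.castSucc
  factor := c.factor ∘ Fin.castSucc
  f i := c.f i.castSucc
  g i := c.g i.castSucc
  δ i := c.δ i.castSucc
  ext i := c.ext i.castSucc

end FChain

theorem isInflSeries_nil {Z : C} (hZ : IsZero Z) : S.IsInflSeries (FChain.nil S Z) Z :=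
  ⟨hZ, rfl, finZeroElim⟩

variable [HasFiniteBiproducts C]

namespace IsET

theorem push_zero (hS : S.IsET) {X A A' : C} (δ : S.Ext X A) : S.push (0 : A ⟶ A') δ = 0 := by
  simpa using hS.push_add (0 : A ⟶ A') 0 δ

theorem pull_zero (hS : S.IsET) {X X' A : C} (δ : S.Ext X A) : S.pull (0 : X' ⟶ X) δ = 0 := by
  simpa using hS.pull_add (0 : X' ⟶ X) 0 δ

theorem ext_eq_zero_of_isZero_left (hS : S.IsET) {X A : C} (hA : IsZero A) (δ : S.Ext X A) :
    δ = 0 := by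
  have hid : S.push (𝟙 A) δ = δ := by simp [push]
  rw [← hid, hA.eq_of_src (𝟙 A) 0, hS.push_zero]

theorem ext_eq_zero_of_isZero_right (hS : S.IsET) {X A : C} (hX : IsZero X) (δ : S.Ext X A) :
    δ = 0 := by
  have hid : S.pull (𝟙 X) δ = δ := by simp [pull]
  rw [← hid, hX.eq_of_src (𝟙 X) 0, hS.pull_zero]

theorem nonempty_iso_biprod_of_isZero (hS : S.IsET) {A B X : C} {f : A ⟶ B} {g : B ⟶ X}
    {δ : S.Ext X A} (h : S.IsExtriangle f g δ) (hAX : IsZero A ∨ IsZero X) :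
    Nonempty (B ≅ A ⊞ X) := by
  obtain rfl : δ = 0 :=
    hAX.elim (hS.ext_eq_zero_of_isZero_left · δ) (hS.ext_eq_zero_of_isZero_right · δ)
  exact ⟨(hS.realize_unique h (hS.realize_zero A X)).choose⟩

variable [HasZeroObject C]

theorem isExtriangle_zero_id (hS : S.IsET) (W : C) :
    S.IsExtriangle (0 : (0 : C) ⟶ W) (𝟙 W) 0 := by
  simpa using hS.realize_iso (isoZeroBiprod (isZero_zero C)).symm (hS.realize_zero 0 W)

theorem isExtriangle_id_zero (hS : S.IsET) (Z : C) :
    S.IsExtriangle (𝟙 Z) (0 : Z ⟶ (0 : C)) 0 := by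
  simpa using hS.realize_iso (isoBiprodZero (isZero_zero C)).symm (hS.realize_zero Z 0)

end IsET

variable [HasZeroObject C]

namespace FChain

noncomputable def consZero (hS : S.IsET) {t : ℕ} (c : S.FChain t) : S.FChain (t + 1) :=
  c.cons (hS.isExtriangle_zero_id (c.obj 0))

noncomputable def biprodRight (hS : S.IsET) {t : ℕ} (c : S.FChain t) (Z : C) : S.FChain t where
  obj i := c.obj i ⊞ Z
  factor i := c.factor i ⊞ 0
  f i := biprod.map (c.f i) (𝟙 Z)
  g i := biprod.map (c.g i) 0
  δ i := S.sumExt (c.δ i) 0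
  ext i := hS.realize_sum (c.ext i) (hS.isExtriangle_id_zero Z)

end FChain

theorem isInflSeries_consZero (hS : S.IsET) {t : ℕ} {c : S.FChain t} {X : C}
    (h0 : ¬ IsZero (c.obj 0)) (hlast : c.obj (Fin.last t) = X)
    (hfactor : ∀ i, ¬ IsZero (c.factor i)) : S.IsInflSeries (c.consZero hS) X :=
  ⟨isZero_zero C, hlast, Fin.cases h0 hfactor⟩

theorem haveIsoInflSeries_of_iso (hS : S.IsET) {X Y : C} (e : X ≅ Y) :
    S.HaveIsoInflSeries X Y := by
  by_cases hX : IsZero X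
  · exact ⟨0, _, _, isInflSeries_nil hX, isInflSeries_nil (hX.of_iso e.symm), 1, finZeroElim⟩
  · refine ⟨1, _, _, isInflSeries_consZero hS (c := FChain.nil S X) hX rfl finZeroElim,
      isInflSeries_consZero hS (c := FChain.nil S Y) (fun hY => hX (hY.of_iso e)) rfl
        finZeroElim, 1, ?_⟩
    simpa [Fin.forall_fin_one] using ⟨e⟩

theorem haveIsoInflSeries_biprod_of_isExtriangle (hS : S.IsET) {A B X : C} {f : A ⟶ B}
    {g : B ⟶ X} {δ : S.Ext X A} (h : S.IsExtriangle f g δ) :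
    S.HaveIsoInflSeries B (A ⊞ X) := by
  by_cases hAX : IsZero A ∨ IsZero X
  · exact haveIsoInflSeries_of_iso hS (hS.nonempty_iso_biprod_of_isZero h hAX).some
  push Not at hAX
  obtain ⟨hA, hX⟩ := hAX
  have hfactors : ∀ i : Fin 1, ¬ IsZero ((Fin.cons X finZeroElim : Fin 1 → C) i) :=
    Fin.cases hX finZeroElim
  refine ⟨2, _, _, isInflSeries_consZero hS (c := (FChain.nil S B).cons h) hA rfl hfactors,
    isInflSeries_consZero hS (c := (FChain.nil S (A ⊞ X)).cons (hS.realize_zero A X)) hA rfl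
      hfactors, 1, ?_⟩
  simpa [Fin.forall_fin_two] using ⟨⟨Iso.refl A⟩, ⟨Iso.refl X⟩⟩

/-- Adding `Z` to every term of a series adds zero summands to the factors; if `Z ≠ 0` the
bottom `0 ⊞ Z` has to be split off as an extra first factor. -/
theorem HaveIsoInflSeries.biprod_right (hS : S.IsET) {X Y : C} (Z : C)
    (h : S.HaveIsoInflSeries X Y) : S.HaveIsoInflSeries (X ⊞ Z) (Y ⊞ Z) := by
  obtain ⟨t, c, d, ⟨hc0, hcX, hc⟩, ⟨hd0, hdY, hd⟩, e, he⟩ := h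
  have hfactor : ∀ (c : S.FChain t), (∀ i, ¬ IsZero (c.factor i)) →
      ∀ i, ¬ IsZero ((c.biprodRight hS Z).factor i) :=
    fun c hc i h => hc i ((biprod_isZero_iff _ _).1 h).1
  have hiso : ∀ i, Nonempty ((c.biprodRight hS Z).factor i ≅ (d.biprodRight hS Z).factor (e i)) :=
    fun i => (he i).map (biprod.mapIso · (Iso.refl 0))
  by_cases hZ : IsZero Z
  · refine ⟨t, c.biprodRight hS Z, d.biprodRight hS Z,
      ⟨(biprod_isZero_iff _ _).2 ⟨hc0, hZ⟩, by simp [FChain.biprodRight, hcX], hfactor c hc⟩,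
      ⟨(biprod_isZero_iff _ _).2 ⟨hd0, hZ⟩, by simp [FChain.biprodRight, hdY], hfactor d hd⟩,
      e, hiso⟩
  have hbot : ∀ W : C, ¬ IsZero (W ⊞ Z) := fun W h => hZ ((biprod_isZero_iff _ _).1 h).2
  obtain ⟨e', he'⟩ := Equiv.Perm.exists_forall_rel_of_fin_cases (fun P Q => Nonempty (P ≅ Q))
    (F := ((c.biprodRight hS Z).consZero hS).factor)
    (G := ((d.biprodRight hS Z).consZero hS).factor)
    ⟨biprod.mapIso (hc0.iso hd0) (Iso.refl Z)⟩ e hiso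
  exact ⟨t + 1, _, _,
    isInflSeries_consZero hS (hbot _) (by simp [FChain.biprodRight, hcX]) (hfactor c hc),
    isInflSeries_consZero hS (hbot _) (by simp [FChain.biprodRight, hdY]) (hfactor d hd), e', he'⟩

end PreExt

open PreExt

variable {C : Type u} [Category.{v} C] [Preadditive C] [HasFiniteBiproducts C]

noncomputable def biproductFinSnocIso {n : ℕ} (F : Fin (n + 1) → C) :
    (⨁ F) ≅ (⨁ (F ∘ Fin.castSucc)) ⊞ F (Fin.last n) where
  hom := biprod.lift (biproduct.lift fun i => biproduct.π F i.castSucc)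
    (biproduct.π F (Fin.last n))
  inv := biprod.desc (biproduct.desc fun i => biproduct.ι F i.castSucc)
    (biproduct.ι F (Fin.last n))
  hom_inv_id := by
    rw [biprod.lift_desc, biproduct.lift_desc, ← biproduct.total, Fin.sum_univ_castSucc]
  inv_hom_id := by
    ext
    all_goals simp [biproduct.ι_π]
    all_goals intro h
    exact absurd h (Fin.castSucc_lt_last _).ne'

variable [HasZeroObject C] {S : PreExt C}

namespace MonRel

theorem reflTransGen_haveIsoInflSeries (hS : S.IsET) {M M' : C} (h : MonRel S M M') :
    Relation.ReflTransGen S.HaveIsoInflSeries M M' := by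
  have : Std.Symm S.HaveIsoInflSeries := ⟨fun _ _ h => h.symm⟩
  induction h with
  | of h => exact .single (haveIsoInflSeries_biprod_of_isExtriangle hS h)
  | iso e => exact .single (haveIsoInflSeries_of_iso hS e)
  | symm _ ih => exact Std.Symm.symm _ _ ih
  | trans _ _ ih₁ ih₂ => exact ih₁.trans ih₂
  | add Z _ ih => exact ih.lift (· ⊞ Z) fun _ _ h => h.biprod_right hS Z

theorem obj_last_biproduct_factor {t : ℕ} (c : S.FChain t) (h0 : IsZero (c.obj 0)) :
    MonRel S (c.obj (Fin.last t)) (⨁ c.factor) := by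
  induction t with
  | zero =>
    refine .iso (h0.iso ?_)
    rw [IsZero.iff_id_eq_zero]
    ext j
    exact j.elim0
  | succ t ih =>
    have hinit : MonRel S (c.obj (Fin.last t).castSucc) (⨁ (c.factor ∘ Fin.castSucc)) :=
      ih c.init h0
    exact (MonRel.of (c.ext (Fin.last t))).trans
      ((hinit.add _).trans (.iso (biproductFinSnocIso c.factor).symm))

theorem of_haveIsoInflSeries {X Y : C} (h : S.HaveIsoInflSeries X Y) : MonRel S X Y := by
  obtain ⟨t, c, d, ⟨hc0, rfl, -⟩, ⟨hd0, rfl, -⟩, e, he⟩ := h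
  exact ((obj_last_biproduct_factor c hc0).trans
    (.iso (biproduct.whiskerEquiv e fun i => (he i).some.symm))).trans
    (obj_last_biproduct_factor d hd0).symm

theorem of_reflTransGen {M M' : C} (h : Relation.ReflTransGen S.HaveIsoInflSeries M M') :
    MonRel S M M' := by
  induction h with
  | refl => exact .iso (Iso.refl M)
  | tail _ hstep ih => exact ih.trans (of_haveIsoInflSeries hstep)

end MonRel

section Statements

variable {C : Type u} [Category.{v} C] [Preadditive C] [HasZeroObject C] [HasFiniteBiproducts C]

theorem stmt8_general (S : PreExt C) (hS : S.IsET) (M M' : C) :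
    MonRel S M M' ↔
      ∃ (n : ℕ) (A : Fin (n + 1) → C), A 0 = M ∧ A (Fin.last n) = M' ∧
        ∀ i : Fin n, S.HaveIsoInflSeries (A i.castSucc) (A i.succ) := by
  rw [← Relation.reflTransGen_iff_exists_fin]
  exact ⟨MonRel.reflTransGen_haveIsoInflSeries hS, MonRel.of_reflTransGen⟩

theorem stmt8 (S : PreExt C) (hS : S.IsET) [EssentiallySmall.{v} C] (M M' : C) :
    MonRel S M M' ↔
      ∃ (n : ℕ) (A : Fin (n + 1) → C), A 0 = M ∧ A (Fin.last n) = M' ∧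
        ∀ i : Fin n, S.HaveIsoInflSeries (A i.castSucc) (A i.succ) :=
  stmt8_general S hS M M'

end Statements

end ExtriPaper
end
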